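/- Let f : ℝ → ℝ be monotone increasing and convex, and let a b : Fin n → ℝ. Let a' and b' denote the monotone sorts of a and b respectively. Then min over permutations σ of Fin n of ∑ i, f(|a(σ(i)) - b(i)|) equals ∑ i, f(|a'(i) - b'(i)|). -/

import Mathlib

/-!
Since `f` is monotone and convex, `g = f ∘ |·|` is convex, and for sorted `a`, `b` the cost
`c k i = g (a k - b i)` is a Monge matrix: for `x₁ ≤ x₂`, `y₁ ≤ y₂` the pairs
`{x₁ - y₁, x₂ - y₂}` and `{x₁ - y₂, x₂ - y₁}` have the same sum and the second spreads wider.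
For a Monge cost, any permutation can be uncrossed by a swap that fixes its largest moved
index without increasing the total cost, so the identity matching is optimal.
-/

open Finset Equiv

theorem ConvexOn.map_add_map_le_of_add_eq {𝕜 : Type*} [Field 𝕜] [LinearOrder 𝕜]
    [IsStrictOrderedRing 𝕜] {s : Set 𝕜} {g : 𝕜 → 𝕜} (hg : ConvexOn 𝕜 s g) {u v p q : 𝕜}
    (hu : u ∈ s) (hv : v ∈ s) (hp : p ∈ Set.Icc u v)
    (hsum : p + q = u + v) : g p + g q ≤ g u + g v := by
  rcases hp.1.eq_or_lt with rfl | hup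
  · obtain rfl : q = v := by linarith
    exact le_rfl
  rcases hp.2.eq_or_lt with rfl | hpv
  · obtain rfl : q = u := by linarith
    exact (add_comm _ _).le
  have hq_eq : q = u + v - p := by linear_combination hsum
  subst hq_eq
  have hp' := hg.secant_mono_aux1 hu hv hup hpv
  have hq' := hg.secant_mono_aux1 hu hv (by linarith : u < u + v - p) (by linarith)
  refine le_of_mul_le_mul_left ?_ (sub_pos.2 (hup.trans hpv))
  linear_combination hp' + hq'

theorem ConvexOn.map_sub_add_map_sub_le {𝕜 : Type*} [Field 𝕜] [LinearOrder 𝕜]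
    [IsStrictOrderedRing 𝕜] {g : 𝕜 → 𝕜} (hg : ConvexOn 𝕜 Set.univ g) {x₁ x₂ y₁ y₂ : 𝕜}
    (hx : x₁ ≤ x₂) (hy : y₁ ≤ y₂) :
    g (x₁ - y₁) + g (x₂ - y₂) ≤ g (x₁ - y₂) + g (x₂ - y₁) :=
  hg.map_add_map_le_of_add_eq trivial trivial ⟨by linarith, by linarith⟩ (by ring)

theorem ConvexOn.comp_norm {E : Type*} [SeminormedAddCommGroup E] [NormedSpace ℝ E]
    {f : ℝ → ℝ} (hf : ConvexOn ℝ (Set.Ici 0) f) (hmono : MonotoneOn f (Set.Ici 0)) :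
    ConvexOn ℝ Set.univ (fun x : E => f ‖x‖) := by
  refine ⟨convex_univ, fun x _ y _ a b ha hb hab => ?_⟩
  have hnorm : ‖a • x + b • y‖ ≤ a * ‖x‖ + b * ‖y‖ := by
    simpa [norm_smul, abs_of_nonneg ha, abs_of_nonneg hb] using norm_add_le (a • x) (b • y)
  exact (hmono (norm_nonneg _) (Set.mem_Ici.2 (by positivity)) hnorm).trans
    (hf.2 (norm_nonneg x) (norm_nonneg y) ha hb hab)

theorem Finset.sum_le_sum_of_eq_off_pair {ι M : Type*} [Fintype ι] [DecidableEq ι]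
    [AddCommMonoid M] [PartialOrder M] [IsOrderedAddMonoid M] {F G : ι → M} {x y : ι}
    (hxy : x ≠ y) (hoff : ∀ i, i ≠ x → i ≠ y → F i = G i) (hpair : F x + F y ≤ G x + G y) :
    ∑ i, F i ≤ ∑ i, G i := by
  rw [← sum_sdiff (subset_univ {x, y}), ← sum_sdiff (subset_univ {x, y}), sum_pair hxy,
    sum_pair hxy]
  refine add_le_add (sum_congr rfl fun i hi => ?_).le hpair
  simp only [mem_sdiff, mem_univ, mem_insert, mem_singleton, true_and, not_or] at hi
  exact hoff i hi.1 hi.2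

def IsMonge {ι κ M : Type*} [Preorder ι] [Preorder κ] [Add M] [LE M] (c : ι → κ → M) : Prop :=
  ∀ ⦃i j k l⦄, i ≤ j → k ≤ l → c i k + c j l ≤ c i l + c j k

theorem ConvexOn.isMonge_comp_sub {ι κ 𝕜 : Type*} [Preorder ι] [Preorder κ] [Field 𝕜]
    [LinearOrder 𝕜] [IsStrictOrderedRing 𝕜] {g : 𝕜 → 𝕜} (hg : ConvexOn 𝕜 Set.univ g)
    {a : ι → 𝕜} {b : κ → 𝕜} (ha : Monotone a) (hb : Monotone b) :
    IsMonge (fun k i => g (a k - b i)) :=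
  fun _ _ _ _ hij hkl => hg.map_sub_add_map_sub_le (ha hij) (hb hkl)

namespace IsMonge

variable {ι M : Type*} [LinearOrder ι] [Fintype ι] [DecidableEq ι]
  [AddCommMonoid M] [PartialOrder M] [IsOrderedAddMonoid M] {c : ι → ι → M}

-- `swap j (σ j) * σ` fixes `j` and sends `σ⁻¹ j` to `σ j`; elsewhere it agrees with `σ`.
theorem sum_swap_mul_le (hc : IsMonge c) (σ : Perm ι) {j : ι} (h₁ : σ j ≤ j)
    (h₂ : σ.symm j ≤ j) : ∑ i, c ((swap j (σ j) * σ) i) i ≤ ∑ i, c (σ i) i := by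
  rcases eq_or_ne (σ j) j with hfix | hmov
  · simp [hfix]
  have hne : σ.symm j ≠ j := fun h => hmov (by rw [← h, apply_symm_apply, h])
  refine sum_le_sum_of_eq_off_pair hne (fun i hi hij => ?_) ?_
  · rw [Perm.mul_apply, swap_apply_of_ne_of_ne (fun h => hi (σ.eq_symm_apply.2 h))
      (σ.injective.ne hij)]
  · simp only [Perm.mul_apply, apply_symm_apply, swap_apply_left, swap_apply_right]
    rw [add_comm (c j _)]
    exact hc h₁ h₂

theorem sum_le_sum_comp_perm (hc : IsMonge c) (σ : Perm ι) :
    ∑ i, c i i ≤ ∑ i, c (σ i) i := by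
  suffices ∀ (s : Finset ι) (σ : Perm ι), (∀ x, σ x ≠ x → x ∈ s) →
      ∑ i, c i i ≤ ∑ i, c (σ i) i from this univ σ fun x _ => mem_univ x
  intro s
  induction s using Finset.induction_on_max with
  | empty =>
    intro σ hσ
    have : σ = 1 := Perm.ext fun x => by_contra fun h => notMem_empty x (hσ x h)
    simp [this]
  | insert j s hmax ih =>
    intro σ hσ
    have below : ∀ x, σ x ≠ x → x ≤ j := fun x hx =>
      (mem_insert.1 (hσ x hx)).elim le_of_eq fun h => (hmax x h).le
    have h₁ : σ j ≤ j := by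
      by_cases h : σ j = j
      · exact h.le
      · exact below _ (σ.injective.ne h)
    have h₂ : σ.symm j ≤ j := by
      by_cases h : σ.symm j = j
      · exact h.le
      · exact below _ (by rw [apply_symm_apply]; exact Ne.symm h)
    refine (ih _ fun x hx => ?_).trans (hc.sum_swap_mul_le σ h₁ h₂)
    have hxj : x ≠ j := by rintro rfl; simp at hx
    refine (mem_insert.1 (hσ x fun hfix => hx ?_)).resolve_left hxj
    rw [Perm.mul_apply, hfix, swap_apply_of_ne_of_ne hxj fun h => hxj (σ.injective (hfix.trans h))]

end IsMonge

theorem matching_loss_eq_sorted (f : ℝ → ℝ) (hmono : Monotone f)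
    (hconv : ConvexOn ℝ Set.univ f) {n : ℕ} (a b a' b' : Fin n → ℝ)
    (τ ρ : Equiv.Perm (Fin n)) (ha' : a' = a ∘ τ) (hb' : b' = b ∘ ρ)
    (hma : Monotone a') (hmb : Monotone b') :
    Finset.univ.inf' Finset.univ_nonempty
        (fun σ : Equiv.Perm (Fin n) => ∑ i, f |a (σ i) - b i|)
      = ∑ i, f |a' i - b' i| := by
  have hconv_abs : ConvexOn ℝ Set.univ (fun x : ℝ => f |x|) := by
    simpa only [Real.norm_eq_abs] using
      (hconv.subset (Set.subset_univ _) (convex_Ici 0)).comp_norm (E := ℝ) (hmono.monotoneOn _)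
  have hmonge := hconv_abs.isMonge_comp_sub hma hmb
  subst ha' hb'
  refine le_antisymm ((inf'_le _ (mem_univ (ρ.symm.trans τ))).trans_eq ?_)
    (le_inf' _ _ fun σ _ => (hmonge.sum_le_sum_comp_perm (ρ.trans (σ.trans τ.symm))).trans_eq ?_)
  · exact (Fintype.sum_equiv ρ _ _ fun i => by simp).symm
  · exact Fintype.sum_equiv ρ _ _ fun i => by simp
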